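/- Let A be a finite set, let H ⊆ A × A be the edge set of a directed graph on A, and let C ⊆ H be a maximal child of H. Then every bridge edge of H belongs to C. -/

import Mathlib

/-- The edge relation of an edge set `E ⊆ A × A`. -/
def EdgeRel {A : Type*} (E : Set (A × A)) : A → A → Prop := fun u v => (u, v) ∈ E

/-- An edge set is acyclic if no vertex has a path of length ≥ 1 back to itself. -/
def AcyclicEdges {A : Type*} (E : Set (A × A)) : Prop :=
  ∀ a : A, ¬ Relation.TransGen (EdgeRel E) a a

/-- Two vertices are strongly connected in `E` if they are equal or there are paths
of length ≥ 1 both ways. -/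
def StronglyConn {A : Type*} (E : Set (A × A)) (u v : A) : Prop :=
  u = v ∨ (Relation.TransGen (EdgeRel E) u v ∧ Relation.TransGen (EdgeRel E) v u)

/-- `S` is a strongly connected component of `E`: an equivalence class of the
strongly-connected relation. -/
def IsSCC {A : Type*} (E : Set (A × A)) (S : Set A) : Prop :=
  ∃ a : A, S = {b : A | StronglyConn E a b}

/-- The bridge edges of `E`: edges whose endpoints are not strongly connected in `E`. -/
def BridgeEdges {A : Type*} (E : Set (A × A)) : Set (A × A) :=
  {e | e ∈ E ∧ ¬ StronglyConn E e.1 e.2}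

/-- `C` is a maximal child of the directed graph with edge set `H`. -/
def MaximalChild {A : Type*} (H C : Set (A × A)) : Prop :=
  C ⊆ H ∧ AcyclicEdges C ∧ ∀ e ∈ H \ C, ¬ AcyclicEdges (C ∪ {e})

/-! If adding the edge `(u, v)` to an acyclic edge set `C ⊆ H` creates a cycle, that cycle runs
through the new edge, so `H` contains a path from `v` back to `u` and `(u, v)` is not a bridge.
Hence a maximal child, to which no edge of `H` can be added, already contains every bridge. -/

namespace EdgeRel

variable {A : Type*}

lemma mono {E F : Set (A × A)} (hEF : E ⊆ F) : EdgeRel E ≤ EdgeRel F :=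
  fun _ _ h => hEF h

lemma transGen_union_singleton {C : Set (A × A)} {u v a b : A}
    (h : Relation.TransGen (EdgeRel (C ∪ {(u, v)})) a b) :
    Relation.TransGen (EdgeRel C) a b ∨
      (Relation.ReflTransGen (EdgeRel (C ∪ {(u, v)})) a u ∧
        Relation.ReflTransGen (EdgeRel (C ∪ {(u, v)})) v b) := by
  induction h with
  | single hab =>
    rcases hab with hab | hab
    · exact .inl (.single hab)
    · obtain ⟨rfl, rfl⟩ := Prod.mk.inj hab
      exact .inr ⟨.refl, .refl⟩
  | tail hac hcb ih =>
    rcases hcb with hcb | hcb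
    · exact ih.imp (·.tail hcb) fun ⟨hau, hvc⟩ => ⟨hau, hvc.tail (.inl hcb)⟩
    · obtain ⟨rfl, rfl⟩ := Prod.mk.inj hcb
      exact .inr ⟨hac.to_reflTransGen, .refl⟩

lemma reflTransGen_of_not_acyclicEdges_union_singleton {C : Set (A × A)} {u v : A}
    (hC : AcyclicEdges C) (h : ¬ AcyclicEdges (C ∪ {(u, v)})) :
    Relation.ReflTransGen (EdgeRel (C ∪ {(u, v)})) v u := by
  obtain ⟨a, ha⟩ := not_forall_not.mp h
  rcases transGen_union_singleton ha with hC' | ⟨hau, hva⟩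
  · exact absurd hC' (hC a)
  · exact hva.trans hau

end EdgeRel

lemma stronglyConn_of_mem_of_reflTransGen {A : Type*} {E : Set (A × A)} {u v : A}
    (huv : (u, v) ∈ E) (hvu : Relation.ReflTransGen (EdgeRel E) v u) : StronglyConn E u v := by
  rcases hvu.cases_head with rfl | ⟨w, hvw, hwu⟩
  · exact .inl rfl
  · exact .inr ⟨.single huv, .head' hvw hwu⟩

theorem maximalChild_contains_bridges_general {A : Type*}
    (H C : Set (A × A)) (hC : MaximalChild H C) :
    BridgeEdges H ⊆ C := by
  obtain ⟨hCH, hCacyc, hCmax⟩ := hC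
  rintro ⟨u, v⟩ ⟨huv, hbridge⟩
  by_contra huvC
  have hvu : Relation.ReflTransGen (EdgeRel (C ∪ {(u, v)})) v u :=
    EdgeRel.reflTransGen_of_not_acyclicEdges_union_singleton hCacyc (hCmax _ ⟨huv, huvC⟩)
  have hsub : C ∪ {(u, v)} ⊆ H := Set.union_subset hCH (Set.singleton_subset_iff.mpr huv)
  exact hbridge (stronglyConn_of_mem_of_reflTransGen huv (Relation.ReflTransGen.mono (EdgeRel.mono hsub) _ _ hvu))

theorem maximalChild_contains_bridges {A : Type*} [Fintype A]
    (H C : Set (A × A)) (hC : MaximalChild H C) :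
    BridgeEdges H ⊆ C :=
  maximalChild_contains_bridges_general H C hC
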